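/- arXiv:math/0508202 — 7 statements merged into one kernel-verified Lean document; each statement's English description precedes it below -/
import Mathlib

section
/- Let A ≥ 9 and define f_A(t) = sin(t)(cos(t) + √(A - sin²(t))). Then the second derivative f_A'' is negative on the open interval (0, π) and positive on (π, 2π). -/
/-!
Write `s = sin t`, `c = cos t` and `r = √(A - s²)`. Differentiating twice gives
`f_A''(t) = -s · (r²((r + 2c)² - 1) + s²c²) / r³`, so it suffices that `r + 2c > 1` whenever
`s ≠ 0`: then `f_A''` has the sign of `-sin t`. Since `A ≥ 9`, `r² ≥ 8 + c²`, and
`8 + c² > (1 - 2c)²` amounts to `(7 - 3c)(1 + c) > 0`, which holds for `|c| < 1`.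
-/

open Real

section Derivatives

variable {A : ℝ}

lemma sub_sin_sq_pos (hA : 1 < A) (u : ℝ) : 0 < A - sin u ^ 2 := by
  nlinarith [sin_sq_le_one u]

lemma hasDerivAt_sqrt_sub_sin_sq (hA : 1 < A) (u : ℝ) :
    HasDerivAt (fun x => √(A - sin x ^ 2)) (-(sin u * cos u) / √(A - sin u ^ 2)) u := by
  have hinner : HasDerivAt (fun x => A - sin x ^ 2) (-(2 * sin u * cos u)) u :=
    (((hasDerivAt_sin u).fun_pow 2).const_sub A).congr_deriv (by ring)
  exact (hinner.sqrt (sub_sin_sq_pos hA u).ne').congr_deriv (by field_simp)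

lemma hasDerivAt_sin_mul_cos_add_sqrt (hA : 1 < A) (u : ℝ) :
    HasDerivAt (fun t => sin t * (cos t + √(A - sin t ^ 2)))
      (cos u * (cos u + √(A - sin u ^ 2)) - sin u * (sin u + sin u * cos u / √(A - sin u ^ 2)))
      u :=
  ((hasDerivAt_sin u).fun_mul ((hasDerivAt_cos u).fun_add
    (hasDerivAt_sqrt_sub_sin_sq hA u))).congr_deriv (by ring)

lemma iteratedDeriv_two_sin_mul_cos_add_sqrt (hA : 1 < A) (t : ℝ) :
    iteratedDeriv 2 (fun t => sin t * (cos t + √(A - sin t ^ 2))) t =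
      -sin t * ((√(A - sin t ^ 2) ^ 2 * ((√(A - sin t ^ 2) + 2 * cos t) ^ 2 - 1)
        + sin t ^ 2 * cos t ^ 2) / √(A - sin t ^ 2) ^ 3) := by
  have hfirst : deriv (fun t => sin t * (cos t + √(A - sin t ^ 2))) = fun u =>
      cos u * (cos u + √(A - sin u ^ 2)) - sin u * (sin u + sin u * cos u / √(A - sin u ^ 2)) :=
    funext fun u => (hasDerivAt_sin_mul_cos_add_sqrt hA u).deriv
  have hr := hasDerivAt_sqrt_sub_sin_sq hA t
  have hr0 : √(A - sin t ^ 2) ≠ 0 := (sqrt_pos.mpr (sub_sin_sq_pos hA t)).ne'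
  have hsecond := ((hasDerivAt_cos t).fun_mul ((hasDerivAt_cos t).fun_add hr)).fun_sub
    ((hasDerivAt_sin t).fun_mul ((hasDerivAt_sin t).fun_add
      (((hasDerivAt_sin t).fun_mul (hasDerivAt_cos t)).fun_div hr hr0)))
  rw [iteratedDeriv_succ, iteratedDeriv_one, hfirst, hsecond.deriv]
  have hpyth := sin_sq_add_cos_sq t
  field_simp
  linear_combination sin t * √(A - sin t ^ 2) ^ 2 * hpyth

end Derivatives

lemma one_lt_add_two_mul_of_sq_le {r c : ℝ} (hr : 0 ≤ r) (hrc : 8 + c ^ 2 ≤ r ^ 2)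
    (hc : c ^ 2 < 1) : 1 < r + 2 * c := by
  have hc1 : -1 < c := by nlinarith
  rcases le_or_gt (1 - 2 * c) 0 with hneg | hpos
  · nlinarith
  · nlinarith [sq_nonneg (r - (1 - 2 * c))]

lemma second_deriv_factor_pos {A s c : ℝ} (hA : 9 ≤ A) (hsc : s ^ 2 + c ^ 2 = 1) (hs : s ≠ 0) :
    0 < (√(A - s ^ 2) ^ 2 * ((√(A - s ^ 2) + 2 * c) ^ 2 - 1) + s ^ 2 * c ^ 2)
      / √(A - s ^ 2) ^ 3 := by
  have hs2 : 0 < s ^ 2 := sq_pos_of_ne_zero hs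
  have hpos : 0 < A - s ^ 2 := by linarith [sq_nonneg c]
  have hr : 0 < √(A - s ^ 2) := sqrt_pos.mpr hpos
  have hr2 : √(A - s ^ 2) ^ 2 = A - s ^ 2 := sq_sqrt hpos.le
  have hkey : 1 < √(A - s ^ 2) + 2 * c :=
    one_lt_add_two_mul_of_sq_le hr.le (by linarith) (by linarith)
  have hnum : 0 < √(A - s ^ 2) ^ 2 * ((√(A - s ^ 2) + 2 * c) ^ 2 - 1) + s ^ 2 * c ^ 2 :=
    add_pos_of_pos_of_nonneg (mul_pos (pow_pos hr 2) (sub_pos.mpr (one_lt_pow₀ hkey two_ne_zero)))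
      (by positivity)
  exact div_pos hnum (pow_pos hr 3)

theorem stmt_0 (A : ℝ) (hA : 9 ≤ A) :
    (∀ t ∈ Set.Ioo (0 : ℝ) π,
      iteratedDeriv 2 (fun t => Real.sin t * (Real.cos t + Real.sqrt (A - Real.sin t ^ 2))) t < 0) ∧
    (∀ t ∈ Set.Ioo π (2 * π),
      0 < iteratedDeriv 2 (fun t => Real.sin t * (Real.cos t + Real.sqrt (A - Real.sin t ^ 2))) t) := by
  have h1A : 1 < A := by linarith
  constructor
  · rintro t ⟨ht0, htπ⟩
    have hsin : 0 < sin t := sin_pos_of_pos_of_lt_pi ht0 htπ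
    rw [iteratedDeriv_two_sin_mul_cos_add_sqrt h1A, neg_mul]
    exact neg_neg_of_pos (mul_pos hsin (second_deriv_factor_pos hA (sin_sq_add_cos_sq t) hsin.ne'))
  · rintro t ⟨htπ, ht2π⟩
    have hsin : sin t < 0 := by
      rw [← sin_sub_two_pi]
      exact sin_neg_of_neg_of_neg_pi_lt (by linarith) (by linarith)
    rw [iteratedDeriv_two_sin_mul_cos_add_sqrt h1A]
    exact mul_pos (neg_pos.mpr hsin) (second_deriv_factor_pos hA (sin_sq_add_cos_sq t) hsin.ne)
end

section
/- Let Θ₀, Θ₁, Θ₂ be three circles (or lines) in the extended complex plane ℂ ∪ {∞} such that Θ₀ ∩ Θ₁ consists of exactly two points and Θ₀ ∩ Θ₁ ∩ Θ₂ = ∅. Then there is at most one circle simultaneously perpendicular to Θ₀, Θ₁, and Θ₂. -/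
open Complex

/-- A generalized circle (circle or line) in ℂ ∪ {∞}, given by the equation
`a|z|² + 2 Re(b̄ z) + c = 0` with the nondegeneracy condition `|b|² > a c`
(which ensures the solution set is a genuine circle or line). -/
structure GenCircle where
  a : ℝ
  b : ℂ
  c : ℝ
  nondeg : a * c < Complex.normSq b

namespace GenCircle

/-- The set of points of a generalized circle in the Riemann sphere ℂ ∪ {∞}.
The point ∞ lies on the circle exactly when `a = 0` (i.e. it is a line). -/
def carrier (C : GenCircle) : Set (OnePoint ℂ) :=
  {p | (p = (OnePoint.infty : OnePoint ℂ) ∧ C.a = 0) ∨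
    ∃ z : ℂ, p = (z : OnePoint ℂ) ∧
      C.a * Complex.normSq z + 2 * ((starRingEnd ℂ C.b) * z).re + C.c = 0}

/-- Perpendicularity of two generalized circles: the vanishing of the
inversive product `2 Re(b₁ b̄₂) - a₁ c₂ - a₂ c₁`. -/
def Perp (C D : GenCircle) : Prop :=
  2 * (C.b * starRingEnd ℂ D.b).re = C.a * D.c + D.a * C.c

end GenCircle

/-! A generalized circle `a|z|² + 2 Re(b̄ z) + c = 0` is the vector `(a, b, c)` of
`ℝ × ℂ × ℝ ≅ ℝ⁴`, on which the inversive product is a nondegenerate symmetric bilinear form.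
A point lies on a circle iff its null vector is orthogonal to the circle's vector, and two
circles are perpendicular iff their vectors are orthogonal.

The vectors of `Θ₀, Θ₁, Θ₂` are linearly independent: `Θ₀` and `Θ₁` are not proportional, since
proportional vectors give the same (infinite) point set while `Θ₀ ∩ Θ₁` is finite, and a point of
`Θ₀ ∩ Θ₁` off `Θ₂` is orthogonal to `Θ₀` and `Θ₁` but not to `Θ₂`. So the vectors of the circles
perpendicular to all three lie in a line, and proportional vectors define the same circle. -/

open Module
open scoped OnePoint

theorem LinearMap.BilinForm.Nondegenerate.exists_smul_eq_of_forall_apply_eq_zero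
    {K V ι : Type*} [Field K] [AddCommGroup V] [Module K V] [FiniteDimensional K V] [Fintype ι]
    {B : LinearMap.BilinForm K V} (hB : B.Nondegenerate) {u : ι → V}
    (hu : LinearIndependent K u) (hcard : Fintype.card ι + 1 = finrank K V)
    {v w : V} (hv : v ≠ 0) (hBv : ∀ i, B (u i) v = 0) (hBw : ∀ i, B (u i) w = 0) :
    ∃ l : K, l • v = w := by
  set W := Submodule.span K (Set.range u)
  have mem_orthogonal : ∀ x, (∀ i, B (u i) x = 0) → x ∈ B.orthogonal W := fun x hx n hn =>
    Submodule.span_le (p := LinearMap.ker (B.flip x)).2 (Set.range_subset_iff.2 hx) hn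
  have hrank : finrank K (B.orthogonal W) = 1 := by
    rw [finrank_orthogonal hB, finrank_span_eq_card hu]
    omega
  obtain ⟨l, hl⟩ := (finrank_eq_one_iff_of_nonzero' (⟨v, mem_orthogonal v hBv⟩ : B.orthogonal W)
    (by simpa using hv)).1 hrank ⟨w, mem_orthogonal w hBw⟩
  exact ⟨l, congrArg Subtype.val hl⟩

namespace GenCircle

noncomputable def inversiveForm : LinearMap.BilinForm ℝ (ℝ × ℂ × ℝ) :=
  LinearMap.mk₂ ℝ
    (fun v w => 2 * (v.2.1.re * w.2.1.re + v.2.1.im * w.2.1.im) - v.1 * w.2.2 - w.1 * v.2.2)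
    (fun _ _ _ => by simp only [Prod.fst_add, Prod.snd_add, Complex.add_re, Complex.add_im]; ring)
    (fun _ _ _ => by
      simp only [Prod.smul_fst, Prod.smul_snd, Complex.real_smul, Complex.re_ofReal_mul,
        Complex.im_ofReal_mul, smul_eq_mul]
      ring)
    (fun _ _ _ => by simp only [Prod.fst_add, Prod.snd_add, Complex.add_re, Complex.add_im]; ring)
    (fun _ _ _ => by
      simp only [Prod.smul_fst, Prod.smul_snd, Complex.real_smul, Complex.re_ofReal_mul,
        Complex.im_ofReal_mul, smul_eq_mul]
      ring)

theorem inversiveForm_apply (v w : ℝ × ℂ × ℝ) :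
    inversiveForm v w =
      2 * (v.2.1.re * w.2.1.re + v.2.1.im * w.2.1.im) - v.1 * w.2.2 - w.1 * v.2.2 :=
  rfl

theorem isRefl_inversiveForm : inversiveForm.IsRefl := fun v w h => by
  rw [inversiveForm_apply] at h ⊢
  linarith

theorem nondegenerate_inversiveForm : inversiveForm.Nondegenerate := by
  refine isRefl_inversiveForm.nondegenerate_iff_separatingLeft.2 fun v hv => ?_
  have h₁ := hv (0, 0, -1)
  have h₂ := hv (-1, 0, 0)
  have h₃ := hv (0, 1, 0)
  have h₄ := hv (0, Complex.I, 0)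
  simp only [inversiveForm_apply] at h₁ h₂ h₃ h₄
  norm_num at h₁ h₂ h₃ h₄
  exact Prod.ext h₁ (Prod.ext (Complex.ext h₃ h₄) h₂)

def toVec (C : GenCircle) : ℝ × ℂ × ℝ := (C.a, C.b, C.c)

def pointVec : OnePoint ℂ → ℝ × ℂ × ℝ
  | ∞ => (0, 0, -1)
  | (z : ℂ) => (-1, z, -Complex.normSq z)

theorem mem_carrier_iff (C : GenCircle) (p : OnePoint ℂ) :
    p ∈ C.carrier ↔ inversiveForm C.toVec (pointVec p) = 0 := by
  cases p with
  | infty => simp [carrier, pointVec, inversiveForm_apply, toVec]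
  | coe z =>
    simp only [carrier, pointVec, inversiveForm_apply, toVec, Set.mem_ofPred_eq,
      OnePoint.coe_ne_infty, false_and, false_or, OnePoint.coe_eq_coe, exists_eq_left',
      Complex.mul_re, Complex.conj_re, Complex.conj_im, Complex.normSq_apply]
    constructor <;> intro h <;> linarith

theorem perp_iff (C D : GenCircle) : C.Perp D ↔ inversiveForm C.toVec D.toVec = 0 := by
  simp only [Perp, inversiveForm_apply, toVec, Complex.mul_re, Complex.conj_re, Complex.conj_im]
  constructor <;> intro h <;> linarith

theorem toVec_ne_zero (C : GenCircle) : C.toVec ≠ 0 := by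
  intro h
  have h' := C.nondeg
  simp only [toVec, Prod.mk_eq_zero] at h
  simp [h.1, h.2.1] at h'

theorem carrier_eq_of_smul_toVec {C D : GenCircle} {l : ℝ} (h : l • C.toVec = D.toVec) :
    C.carrier = D.carrier := by
  have hl : l ≠ 0 := by
    rintro rfl
    exact D.toVec_ne_zero (by rw [← h, zero_smul])
  ext p
  rw [mem_carrier_iff, mem_carrier_iff, ← h, map_smul, LinearMap.smul_apply, smul_eq_mul,
    mul_eq_zero, or_iff_right hl]

theorem infinite_carrier (C : GenCircle) : C.carrier.Infinite := by
  have hs : 0 < Complex.normSq C.b - C.a * C.c := sub_pos.2 C.nondeg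
  by_cases ha : C.a = 0
  · have hb : starRingEnd ℂ C.b ≠ 0 := by
      rw [ha, zero_mul, sub_zero, Complex.normSq_pos] at hs
      exact (map_ne_zero _).2 hs
    -- the points `z` with `conj b * z = -c/2 + t i`
    refine Set.infinite_of_injective_forall_mem (α := ℝ)
      (f := fun t => ((⟨-C.c / 2, t⟩ / starRingEnd ℂ C.b : ℂ) : OnePoint ℂ)) ?_ fun t => ?_
    · intro t t' h
      simpa using (div_left_inj' hb).1 (OnePoint.coe_injective h)
    · refine Or.inr ⟨_, rfl, ?_⟩
      rw [mul_div_cancel₀ _ hb, ha]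
      ring
  · set r := √(Complex.normSq C.b - C.a * C.c)
    have ha' : (C.a : ℂ) ≠ 0 := Complex.ofReal_ne_zero.2 ha
    -- completing the square: `a z + b` runs over the circle `|w| = r`
    have key (z : ℂ) : C.a * (C.a * Complex.normSq z + 2 * (starRingEnd ℂ C.b * z).re + C.c) =
        Complex.normSq (C.a * z + C.b) - r ^ 2 := by
      rw [Real.sq_sqrt hs.le]
      simp only [Complex.normSq_apply, Complex.mul_re, Complex.mul_im, Complex.add_re,
        Complex.add_im, Complex.conj_re, Complex.conj_im, Complex.ofReal_re, Complex.ofReal_im]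
      ring
    refine Set.infinite_of_injOn_mapsTo (s := Set.Icc 0 r)
      (f := fun t => (((⟨t, √(r ^ 2 - t ^ 2)⟩ - C.b) / C.a : ℂ) : OnePoint ℂ)) ?_ ?_
      (Set.Icc_infinite (Real.sqrt_pos.2 hs))
    · intro t _ t' _ h
      simpa using congrArg Complex.re ((div_left_inj' ha').1 (OnePoint.coe_injective h))
    · intro t ht
      refine Or.inr ⟨_, rfl, (mul_eq_zero.1 ?_).resolve_left ha⟩
      have ht2 : t ^ 2 ≤ r ^ 2 := pow_le_pow_left₀ ht.1 ht.2 2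
      rw [key, mul_div_cancel₀ _ ha', sub_add_cancel, Complex.normSq_mk, ← sq, ← sq,
        Real.sq_sqrt (sub_nonneg.2 ht2)]
      ring

theorem linearIndependent_toVec {Θ₀ Θ₁ Θ₂ : GenCircle}
    (htwo : (Θ₀.carrier ∩ Θ₁.carrier).ncard = 2)
    (hempty : Θ₀.carrier ∩ Θ₁.carrier ∩ Θ₂.carrier = ∅) :
    LinearIndependent ℝ ![Θ₂.toVec, Θ₀.toVec, Θ₁.toVec] := by
  refine linearIndependent_finCons.2 ⟨(LinearIndependent.pair_iff' (toVec_ne_zero Θ₀)).2 ?_, ?_⟩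
  · intro l hl
    rw [carrier_eq_of_smul_toVec hl, Set.inter_self, Θ₁.infinite_carrier.ncard] at htwo
    exact absurd htwo (by norm_num)
  · obtain ⟨p, hp⟩ := Set.nonempty_of_ncard_ne_zero (s := Θ₀.carrier ∩ Θ₁.carrier) (by omega)
    have hp₂ : p ∉ Θ₂.carrier := fun h => (Set.eq_empty_iff_forall_notMem.1 hempty) p ⟨hp, h⟩
    intro hspan
    refine hp₂ ((mem_carrier_iff _ _).2 <| Submodule.span_le
      (p := LinearMap.ker (inversiveForm.flip (pointVec p))).2 ?_ hspan)
    rw [Set.range_subset_iff, Fin.forall_fin_two]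
    exact ⟨(mem_carrier_iff _ _).1 hp.1, (mem_carrier_iff _ _).1 hp.2⟩

end GenCircle

open GenCircle in
/-- If Θ₀ ∩ Θ₁ consists of exactly two points and Θ₀ ∩ Θ₁ ∩ Θ₂ = ∅, then
there is at most one circle simultaneously perpendicular to Θ₀, Θ₁, Θ₂. -/
theorem stmt_3 (Θ₀ Θ₁ Θ₂ : GenCircle)
    (htwo : (Θ₀.carrier ∩ Θ₁.carrier).ncard = 2)
    (hempty : Θ₀.carrier ∩ Θ₁.carrier ∩ Θ₂.carrier = ∅)
    (D D' : GenCircle)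
    (hD : D.Perp Θ₀ ∧ D.Perp Θ₁ ∧ D.Perp Θ₂)
    (hD' : D'.Perp Θ₀ ∧ D'.Perp Θ₁ ∧ D'.Perp Θ₂) :
    D.carrier = D'.carrier := by
  have hortho (E : GenCircle) (hE : E.Perp Θ₀ ∧ E.Perp Θ₁ ∧ E.Perp Θ₂) (i : Fin 3) :
      inversiveForm (![Θ₂.toVec, Θ₀.toVec, Θ₁.toVec] i) E.toVec = 0 := by
    obtain ⟨h₀, h₁, h₂⟩ := hE
    refine isRefl_inversiveForm _ _ ?_
    fin_cases i <;> exact (perp_iff _ _).1 ‹_›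
  have hdim : Fintype.card (Fin 3) + 1 = finrank ℝ (ℝ × ℂ × ℝ) := by
    simp [Module.finrank_prod, Complex.finrank_real_complex]
  obtain ⟨l, hl⟩ := nondegenerate_inversiveForm.exists_smul_eq_of_forall_apply_eq_zero
    (linearIndependent_toVec htwo hempty) hdim (toVec_ne_zero D) (hortho D hD) (hortho D' hD')
  exact carrier_eq_of_smul_toVec hl
end

section
/- Let e ∈ ℂ and x ∈ ℝ with x > 1, x ≠ 1, satisfying x(1 - |e|²) = e² + |e|² + ē² and |e|² = x²/(9(x-1)). Then |e - ē|² = x(x-3)²/(9(x-1)). -/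
open ComplexConjugate

theorem Complex.norm_sub_conj_sq (z : ℂ) :
    ((‖z - conj z‖ ^ 2 : ℝ) : ℂ) = 2 * ‖z‖ ^ 2 - z ^ 2 - conj z ^ 2 := by
  push_cast
  rw [← Complex.mul_conj', ← Complex.mul_conj']
  simp only [map_sub, Complex.conj_conj]
  ring

theorem stmt_5 (e : ℂ) (x : ℝ) (hx : 1 < x)
    (h1 : (x : ℂ) * (1 - ((‖e‖ : ℂ)) ^ 2)
        = e ^ 2 + ((‖e‖ : ℂ)) ^ 2 + (starRingEnd ℂ e) ^ 2)
    (h2 : ‖e‖ ^ 2 = x ^ 2 / (9 * (x - 1))) :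
    ‖e - starRingEnd ℂ e‖ ^ 2 = x * (x - 3) ^ 2 / (9 * (x - 1)) := by
  have key : ‖e - conj e‖ ^ 2 = (3 + x) * ‖e‖ ^ 2 - x := Complex.ofReal_injective <| by
    rw [Complex.norm_sub_conj_sq]
    push_cast
    linear_combination h1
  have hx1 : x - 1 ≠ 0 := sub_ne_zero.2 hx.ne'
  rw [key, h2]
  field_simp
  ring
end

section
/- Let e ∈ ℂ and x > 1 real with x(1-|e|²) = e² + |e|² + ē² and |e|² = x²/(9(x-1)). Let β satisfy 2β̄e = (3/(2x))(e² + x|e|²). Then |2β̄e - 1|² = (x-3)²/(18(x-1)). -/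
/-! Write `w = 2 β̄ e = c (e² + x r)` with the real scalar `c = 3 / (2x)` and `r = |e|²`.
Then `|w - 1|² = c² |e² + x r|² - 2 c Re (e² + x r) + 1`, and both `|e² + x r|²` and
`Re (e² + x r)` only involve `r` and `p = Re e²`. Taking real parts in the first hypothesis gives
`2p = x (1 - r) - r`, the second one fixes `r`, and what is left is a rational identity in `x`. -/

open ComplexConjugate

namespace Complex

lemma norm_ofReal_mul_sub_one_sq (c : ℝ) (z : ℂ) :
    ‖(c : ℂ) * z - 1‖ ^ 2 = c ^ 2 * ‖z‖ ^ 2 - 2 * c * z.re + 1 := by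
  simp only [Complex.sq_norm, normSq_apply, sub_re, sub_im, mul_re, mul_im, ofReal_re, ofReal_im,
    one_re, one_im]
  ring

lemma ofReal_norm_sq (e : ℂ) : (‖e‖ : ℂ) ^ 2 = ((e.re ^ 2 + e.im ^ 2 : ℝ) : ℂ) := by
  rw [← ofReal_pow, Complex.sq_norm, normSq_apply]
  ring_nf

lemma norm_sq_add_ofReal_mul_norm_sq (e : ℂ) (t : ℝ) :
    ‖e ^ 2 + t * (‖e‖ : ℂ) ^ 2‖ ^ 2
      = (‖e‖ ^ 2) ^ 2 * (1 + t ^ 2) + 2 * t * ‖e‖ ^ 2 * (e ^ 2).re := by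
  have hr : ‖e‖ ^ 2 = e.re ^ 2 + e.im ^ 2 := by rw [Complex.sq_norm, normSq_apply]; ring
  rw [ofReal_norm_sq, hr, Complex.sq_norm, normSq_apply]
  simp only [add_re, add_im, mul_re, mul_im, ofReal_re, ofReal_im, pow_two]
  ring

lemma re_sq_add_ofReal_mul_norm_sq (e : ℂ) (t : ℝ) :
    (e ^ 2 + t * (‖e‖ : ℂ) ^ 2).re = (e ^ 2).re + t * ‖e‖ ^ 2 := by
  simp [← ofReal_pow]

lemma two_mul_re_sq_of_mul_one_sub_norm_sq_eq {e : ℂ} {x : ℝ}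
    (h : (x : ℂ) * (1 - (‖e‖ : ℂ) ^ 2) = e ^ 2 + (‖e‖ : ℂ) ^ 2 + conj e ^ 2) :
    2 * (e ^ 2).re = x * (1 - ‖e‖ ^ 2) - ‖e‖ ^ 2 := by
  have := congrArg re h
  simp only [← ofReal_pow, ← map_pow, ← ofReal_one, ← ofReal_sub, ← ofReal_mul, ofReal_re,
    add_re, conj_re] at this
  linarith

end Complex

open Complex in
theorem stmt_6 (e β : ℂ) (x : ℝ) (hx : 1 < x)
    (h1 : (x : ℂ) * (1 - (((‖e‖ : ℝ) : ℂ)) ^ 2)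
        = e ^ 2 + (((‖e‖ : ℝ) : ℂ)) ^ 2 + (starRingEnd ℂ e) ^ 2)
    (h2 : ‖e‖ ^ 2 = x ^ 2 / (9 * (x - 1)))
    (hβ : 2 * (starRingEnd ℂ β) * e
        = (3 / (2 * (x : ℂ))) * (e ^ 2 + (x : ℂ) * (((‖e‖ : ℝ) : ℂ)) ^ 2)) :
    ‖2 * (starRingEnd ℂ β) * e - 1‖ ^ 2 = (x - 3) ^ 2 / (18 * (x - 1)) := by
  have hre := two_mul_re_sq_of_mul_one_sub_norm_sq_eq h1
  have hw : 2 * conj β * e = ((3 / (2 * x) : ℝ) : ℂ) * (e ^ 2 + x * (‖e‖ : ℂ) ^ 2) := by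
    rw [hβ]; push_cast; rfl
  rw [hw, norm_ofReal_mul_sub_one_sq, norm_sq_add_ofReal_mul_norm_sq,
    re_sq_add_ofReal_mul_norm_sq,
    show (e ^ 2).re = (x * (1 - ‖e‖ ^ 2) - ‖e‖ ^ 2) / 2 by linarith, h2]
  have hx0 : x ≠ 0 := by linarith
  have hx1 : x - 1 ≠ 0 := by linarith
  field_simp
  ring
end

section
/- The function g(x) = (3(x-1)(9+x) - (x-3)√((x-3)(2x-3)(9-x)))/(16x²) is monotone (strictly decreasing) on the interval [4, 817/200], and takes values in [0.432, 0.438] there. -/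
theorem stmt_10 :
    StrictAntiOn
      (fun x : ℝ =>
        (3 * (x - 1) * (9 + x) - (x - 3) * Real.sqrt ((x - 3) * (2 * x - 3) * (9 - x)))
          / (16 * x ^ 2))
      (Set.Icc (4 : ℝ) (817 / 200)) ∧
    ∀ x ∈ Set.Icc (4 : ℝ) (817 / 200),
      (3 * (x - 1) * (9 + x) - (x - 3) * Real.sqrt ((x - 3) * (2 * x - 3) * (9 - x)))
          / (16 * x ^ 2) ∈ Set.Icc (0.432 : ℝ) 0.438 := by
  have key : StrictAntiOn
      (fun x : ℝ =>
        (3 * (x - 1) * (9 + x) - (x - 3) * Real.sqrt ((x - 3) * (2 * x - 3) * (9 - x)))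
          / (16 * x ^ 2))
      (Set.Icc (4 : ℝ) (817 / 200)) := by
    intro x hx y hy hxy
    obtain ⟨hx1, hx2⟩ := hx
    obtain ⟨hy1, hy2⟩ := hy
    show (3 * (y - 1) * (9 + y) - (y - 3) * Real.sqrt ((y - 3) * (2 * y - 3) * (9 - y)))
          / (16 * y ^ 2)
        < (3 * (x - 1) * (9 + x) - (x - 3) * Real.sqrt ((x - 3) * (2 * x - 3) * (9 - x)))
          / (16 * x ^ 2)
    set sx := Real.sqrt ((x - 3) * (2 * x - 3) * (9 - x)) with hsx
    set sy := Real.sqrt ((y - 3) * (2 * y - 3) * (9 - y)) with hsy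
    have hPx : (0:ℝ) ≤ (x - 3) * (2 * x - 3) * (9 - x) :=
      mul_nonneg (mul_nonneg (by linarith) (by linarith)) (by linarith)
    have hPy : (0:ℝ) ≤ (y - 3) * (2 * y - 3) * (9 - y) :=
      mul_nonneg (mul_nonneg (by linarith) (by linarith)) (by linarith)
    have hsx2 : sx ^ 2 = (x - 3) * (2 * x - 3) * (9 - x) := Real.sq_sqrt hPx
    have hsy2 : sy ^ 2 = (y - 3) * (2 * y - 3) * (9 - y) := Real.sq_sqrt hPy
    have hsx0 : 0 ≤ sx := Real.sqrt_nonneg _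
    have hsy0 : 0 ≤ sy := Real.sqrt_nonneg _
    clear_value sx sy
    have hu0 : (0:ℝ) ≤ x - 4 := by linarith
    have hv0 : (0:ℝ) ≤ y - 4 := by linarith
    have hu1 : x - 4 ≤ 1 := by linarith
    have hv1 : y - 4 ≤ 1 := by linarith
    have hG : (0:ℝ) ≤ (-729)*y^3 + (-729)*x*y^2 + 1296*x*y^3 + (-729)*x^2*y
        + 1296*x^2*y^2 + (-864)*x^2*y^3 + (-729)*x^3 + 1296*x^3*y
        + (-864)*x^3*y^2 + 270*x^3*y^3 + (-2)*x^4*y^4 := by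
      have hn1 : (y-4)^3 ≤ 1 := pow_le_one₀ hv0 hv1
      have hn2 : (y-4)^4 ≤ 1 := pow_le_one₀ hv0 hv1
      have hn3 : (x-4)^1 * (y-4)^3 ≤ 1 := mul_le_one₀ (pow_le_one₀ hu0 hu1) (pow_nonneg hv0 _) (pow_le_one₀ hv0 hv1)
      have hn4 : (x-4)^1 * (y-4)^4 ≤ 1 := mul_le_one₀ (pow_le_one₀ hu0 hu1) (pow_nonneg hv0 _) (pow_le_one₀ hv0 hv1)
      have hn5 : (x-4)^2 * (y-4)^3 ≤ 1 := mul_le_one₀ (pow_le_one₀ hu0 hu1) (pow_nonneg hv0 _) (pow_le_one₀ hv0 hv1)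
      have hn6 : (x-4)^2 * (y-4)^4 ≤ 1 := mul_le_one₀ (pow_le_one₀ hu0 hu1) (pow_nonneg hv0 _) (pow_le_one₀ hv0 hv1)
      have hn7 : (x-4)^3 ≤ 1 := pow_le_one₀ hu0 hu1
      have hn8 : (x-4)^3 * (y-4)^1 ≤ 1 := mul_le_one₀ (pow_le_one₀ hu0 hu1) (pow_nonneg hv0 _) (pow_le_one₀ hv0 hv1)
      have hn9 : (x-4)^3 * (y-4)^2 ≤ 1 := mul_le_one₀ (pow_le_one₀ hu0 hu1) (pow_nonneg hv0 _) (pow_le_one₀ hv0 hv1)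
      have hn10 : (x-4)^3 * (y-4)^3 ≤ 1 := mul_le_one₀ (pow_le_one₀ hu0 hu1) (pow_nonneg hv0 _) (pow_le_one₀ hv0 hv1)
      have hn11 : (x-4)^3 * (y-4)^4 ≤ 1 := mul_le_one₀ (pow_le_one₀ hu0 hu1) (pow_nonneg hv0 _) (pow_le_one₀ hv0 hv1)
      have hn12 : (x-4)^4 ≤ 1 := pow_le_one₀ hu0 hu1
      have hn13 : (x-4)^4 * (y-4)^1 ≤ 1 := mul_le_one₀ (pow_le_one₀ hu0 hu1) (pow_nonneg hv0 _) (pow_le_one₀ hv0 hv1)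
      have hn14 : (x-4)^4 * (y-4)^2 ≤ 1 := mul_le_one₀ (pow_le_one₀ hu0 hu1) (pow_nonneg hv0 _) (pow_le_one₀ hv0 hv1)
      have hn15 : (x-4)^4 * (y-4)^3 ≤ 1 := mul_le_one₀ (pow_le_one₀ hu0 hu1) (pow_nonneg hv0 _) (pow_le_one₀ hv0 hv1)
      have hn16 : (x-4)^4 * (y-4)^4 ≤ 1 := mul_le_one₀ (pow_le_one₀ hu0 hu1) (pow_nonneg hv0 _) (pow_le_one₀ hv0 hv1)
      have hp1 : (0:ℝ) ≤ (y-4)^1 := pow_nonneg hv0 _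
      have hp2 : (0:ℝ) ≤ (x-4)^1 := pow_nonneg hu0 _
      have hp3 : (0:ℝ) ≤ (y-4)^2 := pow_nonneg hv0 _
      have hp4 : (0:ℝ) ≤ (x-4)^2 := pow_nonneg hu0 _
      have hp5 : (0:ℝ) ≤ (x-4)^1 * (y-4)^1 := mul_nonneg (pow_nonneg hu0 _) (pow_nonneg hv0 _)
      have hp6 : (0:ℝ) ≤ (x-4)^1 * (y-4)^2 := mul_nonneg (pow_nonneg hu0 _) (pow_nonneg hv0 _)
      have hp7 : (0:ℝ) ≤ (x-4)^2 * (y-4)^1 := mul_nonneg (pow_nonneg hu0 _) (pow_nonneg hv0 _)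
      have hp8 : (0:ℝ) ≤ (x-4)^2 * (y-4)^2 := mul_nonneg (pow_nonneg hu0 _) (pow_nonneg hv0 _)
      linarith [hn1, hn2, hn3, hn4, hn5, hn6, hn7, hn8, hn9, hn10, hn11, hn12, hn13, hn14,
        hn15, hn16, hp1, hp2, hp3, hp4, hp5, hp6, hp7, hp8]
    have hFac : (0:ℝ) ≤ (y - x) * ((-729)*y^3 + (-729)*x*y^2 + 1296*x*y^3 + (-729)*x^2*y
        + 1296*x^2*y^2 + (-864)*x^2*y^3 + (-729)*x^3 + 1296*x^3*y
        + (-864)*x^3*y^2 + 270*x^3*y^3 + (-2)*x^4*y^4) :=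
      mul_nonneg (by linarith) hG
    have hBsq : ((x - 3) * y ^ 2 * sx) ^ 2 ≤ ((y - 3) * x ^ 2 * sy) ^ 2 := by
      have h1 : ((x - 3) * y ^ 2 * sx) ^ 2 = ((x-3)*y^2)^2 * ((x - 3) * (2 * x - 3) * (9 - x)) := by
        rw [mul_pow, hsx2]
      have h2 : ((y - 3) * x ^ 2 * sy) ^ 2 = ((y-3)*x^2)^2 * ((y - 3) * (2 * y - 3) * (9 - y)) := by
        rw [mul_pow, hsy2]
      rw [h1, h2]
      nlinarith [hFac]
    have hl : 0 ≤ (x - 3) * y ^ 2 * sx :=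
      mul_nonneg (mul_nonneg (by linarith) (sq_nonneg y)) hsx0
    have hr : 0 ≤ (y - 3) * x ^ 2 * sy :=
      mul_nonneg (mul_nonneg (by linarith) (sq_nonneg x)) hsy0
    have hB : (x - 3) * y ^ 2 * sx ≤ (y - 3) * x ^ 2 * sy := by
      have h := Real.sqrt_le_sqrt hBsq
      rwa [Real.sqrt_sq hl, Real.sqrt_sq hr] at h
    have h8 : (0:ℝ) < 8*x*y - 9*(x+y) := by nlinarith [mul_nonneg hu0 hv0]
    have hA : (0:ℝ) < (y - x) * (8*x*y - 9*(x+y)) :=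
      mul_pos (by linarith) h8
    have hxp : (0:ℝ) < x := by linarith
    have hyp : (0:ℝ) < y := by linarith
    have hx0 : (0:ℝ) < 16 * x ^ 2 := by positivity
    have hy0 : (0:ℝ) < 16 * y ^ 2 := by positivity
    rw [div_lt_div_iff₀ hy0 hx0]
    linarith [hB, hA]
  refine ⟨key, ?_⟩
  intro x hx
  have mono := key.antitoneOn
  have h4 : (4:ℝ) ∈ Set.Icc (4:ℝ) (817/200) := by constructor <;> norm_num
  have hc : (817/200:ℝ) ∈ Set.Icc (4:ℝ) (817/200) := by constructor <;> norm_num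
  have hup : (3 * (x - 1) * (9 + x) - (x - 3) * Real.sqrt ((x - 3) * (2 * x - 3) * (9 - x)))
      / (16 * x ^ 2)
      ≤ (3 * ((4:ℝ) - 1) * (9 + 4) - ((4:ℝ) - 3) * Real.sqrt (((4:ℝ) - 3) * (2 * 4 - 3) * (9 - 4)))
      / (16 * (4:ℝ) ^ 2) := mono h4 hx hx.1
  have hlo : (3 * ((817/200:ℝ) - 1) * (9 + 817/200)
      - ((817/200:ℝ) - 3) * Real.sqrt (((817/200:ℝ) - 3) * (2 * (817/200) - 3) * (9 - 817/200)))
      / (16 * (817/200:ℝ) ^ 2)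
      ≤ (3 * (x - 1) * (9 + x) - (x - 3) * Real.sqrt ((x - 3) * (2 * x - 3) * (9 - x)))
      / (16 * x ^ 2) := mono hx hc hx.2
  have hval4 : (3 * ((4:ℝ) - 1) * (9 + 4) - ((4:ℝ) - 3) * Real.sqrt (((4:ℝ) - 3) * (2 * 4 - 3) * (9 - 4)))
      / (16 * (4:ℝ) ^ 2) = 0.4375 := by
    rw [show ((4:ℝ) - 3) * (2 * 4 - 3) * (9 - 4) = 5 ^ 2 by norm_num, Real.sqrt_sq (by norm_num)]
    norm_num
  have hvalc : (0.432:ℝ) ≤ (3 * ((817/200:ℝ) - 1) * (9 + 817/200)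
      - ((817/200:ℝ) - 3) * Real.sqrt (((817/200:ℝ) - 3) * (2 * (817/200) - 3) * (9 - 817/200)))
      / (16 * (817/200:ℝ) ^ 2) := by
    have hs : Real.sqrt (((817/200:ℝ) - 3) * (2 * (817/200) - 3) * (9 - 817/200)) ≤ 5.3 := by
      rw [show (5.3:ℝ) = Real.sqrt (5.3 ^ 2) from (Real.sqrt_sq (by norm_num)).symm]
      apply Real.sqrt_le_sqrt
      norm_num
    rw [le_div_iff₀ (by norm_num : (0:ℝ) < 16 * (817/200:ℝ) ^ 2)]
    nlinarith [hs]
  rw [hval4] at hup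
  constructor
  · linarith [hvalc, hlo]
  · linarith [hup]
end

section
/- For 0 < v < w < u real numbers, (log(u+v) - log(u-v))/(log(u+w) - log(u-w)) < v/w. -/
/-!
Put `x = t / u`. Then `(log (u + t) - log (u - t)) / t = (1 / u) * ∑ₖ 2 / (2k + 1) * x ^ (2k)`,
a power series in `x` with positive coefficients and only even powers, hence strictly increasing
for `0 < x < 1`. Comparing this quotient at `t = v` and `t = w` gives the inequality.
-/

open Real Set

lemma hasSum_log_one_add_sub_log_one_sub_div {x : ℝ} (h : |x| < 1) (hx : x ≠ 0) :
    HasSum (fun k : ℕ => 2 / (2 * k + 1) * x ^ (2 * k))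
      ((log (1 + x) - log (1 - x)) / x) := by
  refine ((hasSum_log_sub_log_of_abs_lt_one h).div_const x).congr_fun fun k => ?_
  rw [pow_succ]
  field_simp

lemma strictMonoOn_log_one_add_sub_log_one_sub_div :
    StrictMonoOn (fun x : ℝ => (log (1 + x) - log (1 - x)) / x) (Ioo 0 1) := by
  intro x ⟨hx₀, hx₁⟩ y ⟨hy₀, hy₁⟩ hxy
  refine hasSum_lt (i := 1) (fun k => ?_) ?_
    (hasSum_log_one_add_sub_log_one_sub_div (abs_lt.2 ⟨by linarith, hx₁⟩) hx₀.ne')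
    (hasSum_log_one_add_sub_log_one_sub_div (abs_lt.2 ⟨by linarith, hy₁⟩) hy₀.ne')
  · gcongr
  · norm_num
    nlinarith

lemma log_add_sub_log_sub_div_eq {u t : ℝ} (ht : |t| < u) :
    (log (u + t) - log (u - t)) / t = (log (1 + t / u) - log (1 - t / u)) / (t / u) / u := by
  obtain ⟨hut, htu⟩ := abs_lt.1 ht
  have hu : 0 < u := (abs_nonneg t).trans_lt ht
  have h₁ : 0 < 1 + t / u := by rw [← neg_lt_iff_pos_add', lt_div_iff₀ hu]; linarith
  have h₂ : 0 < 1 - t / u := by rw [sub_pos, div_lt_one hu]; exact htu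
  have e₁ : u + t = u * (1 + t / u) := by field_simp
  have e₂ : u - t = u * (1 - t / u) := by field_simp
  rw [e₁, e₂, log_mul hu.ne' h₁.ne', log_mul hu.ne' h₂.ne']
  field_simp
  ring

lemma strictMonoOn_log_add_sub_log_sub_div {u : ℝ} (hu : 0 < u) :
    StrictMonoOn (fun t : ℝ => (log (u + t) - log (u - t)) / t) (Ioo 0 u) := by
  intro s ⟨hs₀, hsu⟩ t ⟨ht₀, htu⟩ hst
  simp only [log_add_sub_log_sub_div_eq ((abs_of_pos hs₀).trans_lt hsu),
    log_add_sub_log_sub_div_eq ((abs_of_pos ht₀).trans_lt htu)]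
  refine div_lt_div_of_pos_right ?_ hu
  refine strictMonoOn_log_one_add_sub_log_one_sub_div ?_ ?_ (by gcongr)
  · exact ⟨by positivity, (div_lt_one hu).2 hsu⟩
  · exact ⟨by positivity, (div_lt_one hu).2 htu⟩

theorem stmt_14 (u v w : ℝ) (hv : 0 < v) (hvw : v < w) (hwu : w < u) :
    (Real.log (u + v) - Real.log (u - v)) / (Real.log (u + w) - Real.log (u - w))
      < v / w := by
  have hw : 0 < w := hv.trans hvw
  have hu : 0 < u := hw.trans hwu
  have hlog_w : 0 < log (u + w) - log (u - w) :=
    sub_pos.2 (log_lt_log (by linarith) (by linarith))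
  have hmono := strictMonoOn_log_add_sub_log_sub_div hu ⟨hv, hvw.trans hwu⟩ ⟨hw, hwu⟩ hvw
  rw [div_lt_div_iff₀ hv hw] at hmono
  rw [div_lt_div_iff₀ hlog_w hw]
  linarith
end

section
/- Let c ∈ (0, 1/3], R(c) = 4/c - c, and suppose h₁ = 2c and 0 < h₁ - h₂ < 1 with (h₁ - h₂)(2R(c) - (h₁ - h₂)) ≤ (c + (1-c)²)². Then 1 - h₂/h₁ < 1/12. -/
theorem stmt_16 (c h₁ h₂ : ℝ) (hc : c ∈ Set.Ioc (0 : ℝ) (1 / 3))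
    (hh₁ : h₁ = 2 * c) (hpos : 0 < h₁ - h₂) (hlt : h₁ - h₂ < 1)
    (hineq : (h₁ - h₂) * (2 * (4 / c - c) - (h₁ - h₂)) ≤ (c + (1 - c) ^ 2) ^ 2) :
    1 - h₂ / h₁ < 1 / 12 := by
  obtain ⟨hc0, hc3⟩ := hc
  have hm : c * (4 / c) = 4 := by field_simp
  have key := mul_le_mul_of_nonneg_left hineq hc0.le
  have hm' : (h₁ - h₂) * (c * (4 / c)) = (h₁ - h₂) * 4 := by rw [hm]
  have key' : (h₁ - h₂) * (8 - 2 * c ^ 2 - c * (h₁ - h₂)) ≤ c * (c + (1 - c) ^ 2) ^ 2 := by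
    have e : (h₁ - h₂) * (8 - 2 * c ^ 2 - c * (h₁ - h₂))
        = c * ((h₁ - h₂) * (2 * (4 / c - c) - (h₁ - h₂)))
          + 2 * ((h₁ - h₂) * 4 - (h₁ - h₂) * (c * (4 / c))) := by ring
    rw [e, hm']
    linarith [key]
  have hcd : c * (h₁ - h₂) < c := mul_lt_of_lt_one_right hc0 hlt
  have hd : h₁ - h₂ < c / 6 := by
    by_contra h
    push_neg at h
    have hfac : (0:ℝ) ≤ 8 - 2 * c ^ 2 - c * (h₁ - h₂) := by nlinarith
    have hprod : 0 ≤ (h₁ - h₂ - c / 6) * (8 - 2 * c ^ 2 - c * (h₁ - h₂)) :=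
      mul_nonneg (by linarith) hfac
    nlinarith [mul_pos hc0 hc0, mul_pos (mul_pos hc0 hc0) hc0,
      mul_lt_of_lt_one_right (mul_pos hc0 hc0) (by linarith : c < 1),
      mul_pos (mul_pos (mul_pos hc0 hc0) hc0) hc0]
  rw [hh₁]
  rw [sub_lt_iff_lt_add, ← sub_lt_iff_lt_add', lt_div_iff₀ (by linarith : (0:ℝ) < 2*c)]
  nlinarith
end
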